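/- With the same setup of detours of single-failure replacement paths with highest-possible divergence points: if detour D₂ is strictly nested in D₁, i.e., x₁ < x₂ ≤ y₂ < y₁ on π(s,v), then D₁ and D₂ are vertex-disjoint. -/

import Mathlib

/-!
Let `u` lie on both detours; it is not on `π`. Crossing the replacement paths at `u` gives
`P' = π(s,x₀) D₀(x₀,u) D₁(u,y₁) π(y₁,v)` and `Q = π(s,x₁) D₁(x₁,u) D₀(u,y₀) π(y₀,v)`, of the
same total weight as `P₀` and `P₁`. A detour uses no edge of `π`, so neither `P'` nor `Q` uses
`e₁`, and `Q` is no lighter than `P₁`. If `e₀` lies before `x₁`, then `P'` avoids `e₀` too, is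
no heavier than `P₀`, and by uniqueness its shortcut is `P₀`; but `P'` misses the last edge of
`D₀`. Otherwise `Q` avoids `e₀`, and symmetrically `P'` shortcuts to `P₁`, yet misses the first
edge of `D₁`.
-/

def walkWeight {V : Type*} (W : Sym2 V → ℝ) {G : SimpleGraph V} {u v : V}
    (p : G.Walk u v) : ℝ := (p.edges.map W).sum

def vpos {V : Type*} [DecidableEq V] {G : SimpleGraph V} {s v : V}
    (π : G.Walk s v) (u : V) : ℕ := π.support.idxOf u

open SimpleGraph Walk

section Weights

variable {V : Type*} {G : SimpleGraph V} (W : Sym2 V → ℝ)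

lemma walkWeight_append {u v w : V} (p : G.Walk u v) (q : G.Walk v w) :
    walkWeight W (p.append q) = walkWeight W p + walkWeight W q := by
  simp [walkWeight, edges_append]

lemma walkWeight_takeUntil_add_dropUntil [DecidableEq V] {u v w : V} (p : G.Walk u v)
    (h : w ∈ p.support) :
    walkWeight W (p.takeUntil w h) + walkWeight W (p.dropUntil w h) = walkWeight W p := by
  rw [← walkWeight_append, take_spec]

lemma walkWeight_bypass_le [DecidableEq V] (hW : ∀ e, 0 < W e) {u v : V} (p : G.Walk u v) :
    walkWeight W p.bypass ≤ walkWeight W p := by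
  obtain ⟨l, hperm, hsub⟩ :=
    p.bypass_isPath.isTrail.edges_nodup.subperm p.edges_bypass_subset_edges
  calc walkWeight W p.bypass = (l.map W).sum := (hperm.map W).sum_eq.symm
    _ ≤ walkWeight W p := (hsub.map W).sum_le_sum fun _ hw => by
        obtain ⟨e, -, rfl⟩ := List.mem_map.1 hw
        exact (hW e).le

variable (G) in
def UniqueLightestPaths : Prop :=
  ∀ (s' : Set (Sym2 V)) (u w : V) (p q : G.Walk u w), p.IsPath → q.IsPath →
    (∀ f ∈ p.edges, f ∉ s') → (∀ f ∈ q.edges, f ∉ s') →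
    (∀ r : G.Walk u w, r.IsPath → (∀ f ∈ r.edges, f ∉ s') →
      walkWeight W p ≤ walkWeight W r) →
    (∀ r : G.Walk u w, r.IsPath → (∀ f ∈ r.edges, f ∉ s') →
      walkWeight W q ≤ walkWeight W r) →
    p = q

structure IsLightestPathAvoiding (e : Sym2 V) {u w : V} (P : G.Walk u w) : Prop where
  isPath : P.IsPath
  notMem_edges : e ∉ P.edges
  le_of_isPath : ∀ R : G.Walk u w, R.IsPath → e ∉ R.edges → walkWeight W P ≤ walkWeight W R

namespace IsLightestPathAvoiding

variable [DecidableEq V] {W} {e f : Sym2 V} {u w : V} {P Q P' Q' : G.Walk u w}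

lemma le_walkWeight (hW : ∀ e, 0 < W e) (hP : IsLightestPathAvoiding W e P)
    (hP' : e ∉ P'.edges) : walkWeight W P ≤ walkWeight W P' :=
  (hP.le_of_isPath _ P'.bypass_isPath fun h => hP' (P'.edges_bypass_subset_edges h)).trans
    (walkWeight_bypass_le W hW P')

lemma bypass_eq (hW : ∀ e, 0 < W e) (huniq : UniqueLightestPaths G W)
    (hP : IsLightestPathAvoiding W e P) (hP' : e ∉ P'.edges)
    (hle : walkWeight W P' ≤ walkWeight W P) : P'.bypass = P := by
  have avoid_of : ∀ r : G.Walk u w, e ∉ r.edges → ∀ f ∈ r.edges, f ∉ ({e} : Set (Sym2 V)) :=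
    fun r hr f hf hfe => hr (Set.mem_singleton_iff.1 hfe ▸ hf)
  have notMem_of : ∀ r : G.Walk u w, (∀ f ∈ r.edges, f ∉ ({e} : Set (Sym2 V))) → e ∉ r.edges :=
    fun r hr he => hr e he rfl
  refine huniq {e} u w _ _ P'.bypass_isPath hP.isPath
    (avoid_of _ fun h => hP' (P'.edges_bypass_subset_edges h)) (avoid_of _ hP.notMem_edges)
    (fun r hr hre => ?_) (fun r hr hre => hP.le_of_isPath r hr (notMem_of r hre))
  calc walkWeight W P'.bypass ≤ walkWeight W P' := walkWeight_bypass_le W hW P'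
    _ ≤ walkWeight W P := hle
    _ ≤ walkWeight W r := hP.le_of_isPath r hr (notMem_of r hre)

lemma bypass_eq_of_add_eq (hW : ∀ e, 0 < W e) (huniq : UniqueLightestPaths G W)
    (hP : IsLightestPathAvoiding W e P) (hQ : IsLightestPathAvoiding W f Q)
    (hP' : e ∉ P'.edges) (hQ' : f ∉ Q'.edges)
    (hsum : walkWeight W P' + walkWeight W Q' = walkWeight W P + walkWeight W Q) :
    P'.bypass = P :=
  hP.bypass_eq hW huniq hP' (by linarith [hP.le_walkWeight hW hP', hQ.le_walkWeight hW hQ'])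

end IsLightestPathAvoiding

end Weights

section Positions

variable {V : Type*} [DecidableEq V] {G : SimpleGraph V} {s v : V} {π : G.Walk s v}

lemma vpos_le_of_mem_support_takeUntil {u w : V} (hu : u ∈ π.support)
    (hw : w ∈ (π.takeUntil u hu).support) : vpos π w ≤ vpos π u := by
  have := ((π.support_takeUntil_prefix_support hu).mem_iff_idxOf_lt_length w).1 hw
  rw [length_support, length_takeUntil] at this
  exact Nat.lt_succ_iff.1 this

lemma SimpleGraph.Walk.IsPath.eq_of_mem_support_takeUntil_of_mem_support_dropUntil
    (hπ : π.IsPath) {u w : V} (hu : u ∈ π.support) (h₁ : w ∈ (π.takeUntil u hu).support)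
    (h₂ : w ∈ (π.dropUntil u hu).support) : w = u := by
  have hnd := hπ.support_nodup
  rw [← π.take_spec hu, support_append, List.nodup_append] at hnd
  rw [← cons_tail_support] at h₂
  exact (List.mem_cons.1 h₂).resolve_right fun h => hnd.2.2 w h₁ w h rfl

lemma vpos_le_of_mem_support_dropUntil (hπ : π.IsPath) {u w : V} (hu : u ∈ π.support)
    (hw : w ∈ (π.dropUntil u hu).support) : vpos π u ≤ vpos π w := by
  by_contra! hlt
  have hw' : w ∈ (π.takeUntil u hu).support := by
    rw [(π.support_takeUntil_prefix_support hu).mem_iff_idxOf_lt_length, length_support,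
      length_takeUntil]
    exact Nat.lt_succ_of_lt hlt
  rw [hπ.eq_of_mem_support_takeUntil_of_mem_support_dropUntil hu hw' hw] at hlt
  exact lt_irrefl _ hlt

/-- A detour internally disjoint from `π` could only use the `π`-edge `s(x, y)`, with `y` right
after `x`; then that is the edge it avoids. -/
lemma notMem_edges_of_vpos_succ {x y a a' b b' : V} {D : G.Walk x y}
    (hD : ∀ w ∈ D.support, w ∈ π.support → w = x ∨ w = y)
    (ha : s(a, a') ∈ π.edges) (haa' : vpos π a' = vpos π a + 1)
    (hxa : vpos π x ≤ vpos π a) (ha'y : vpos π a' ≤ vpos π y) (hDa : s(a, a') ∉ D.edges)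
    (hb : s(b, b') ∈ π.edges) (hbb' : vpos π b' = vpos π b + 1) :
    s(b, b') ∉ D.edges := by
  intro hDb
  rcases hD b (D.fst_mem_support_of_mem_edges hDb) (π.fst_mem_support_of_mem_edges hb)
    with rfl | rfl <;>
  rcases hD b' (D.snd_mem_support_of_mem_edges hDb) (π.snd_mem_support_of_mem_edges hb)
    with rfl | rfl
  · omega
  · obtain rfl : a = b :=
      (List.idxOf_inj (π.fst_mem_support_of_mem_edges ha)).1 (by unfold vpos at *; omega)
    obtain rfl : a' = b' :=
      (List.idxOf_inj (π.snd_mem_support_of_mem_edges ha)).1 (by unfold vpos at *; omega)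
    exact hDa hDb
  · omega
  · omega

end Positions

section ReplacementPaths

variable {V : Type*} [DecidableEq V] {G : SimpleGraph V} {s v : V}

def replacementPath (π : G.Walk s v) {x y : V} (hx : x ∈ π.support) (hy : y ∈ π.support)
    (D : G.Walk x y) : G.Walk s v :=
  (π.takeUntil x hx).append (D.append (π.dropUntil y hy))

variable {π : G.Walk s v} {x y : V} {hx : x ∈ π.support} {hy : y ∈ π.support}

lemma walkWeight_replacementPath (W : Sym2 V → ℝ) (D : G.Walk x y) :
    walkWeight W (replacementPath π hx hy D) =
      walkWeight W (π.takeUntil x hx) + walkWeight W D + walkWeight W (π.dropUntil y hy) := by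
  simp only [replacementPath, walkWeight_append]
  ring

lemma mem_edges_replacementPath {D : G.Walk x y} {e : Sym2 V} :
    e ∈ (replacementPath π hx hy D).edges ↔
      e ∈ (π.takeUntil x hx).edges ∨ e ∈ D.edges ∨ e ∈ (π.dropUntil y hy).edges := by
  simp [replacementPath, edges_append]

lemma edges_subset_replacementPath (D : G.Walk x y) :
    D.edges ⊆ (replacementPath π hx hy D).edges :=
  fun _ he => mem_edges_replacementPath.2 (Or.inr (Or.inl he))

lemma notMem_edges_replacementPath (hπ : π.IsPath) {D : G.Walk x y} {a a' : V}
    (hxa' : vpos π x < vpos π a') (hay : vpos π a < vpos π y) (hD : s(a, a') ∉ D.edges) :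
    s(a, a') ∉ (replacementPath π hx hy D).edges := by
  rw [mem_edges_replacementPath]
  rintro (he | he | he)
  · have := vpos_le_of_mem_support_takeUntil hx (snd_mem_support_of_mem_edges _ he)
    omega
  · exact hD he
  · have := vpos_le_of_mem_support_dropUntil hπ hy (fst_mem_support_of_mem_edges _ he)
    omega

end ReplacementPaths

section Splicing

variable {V : Type*} [DecidableEq V] {G : SimpleGraph V} {x y x' y' u : V}

def spliceAt (D : G.Walk x y) (D' : G.Walk x' y') (hu : u ∈ D.support) (hu' : u ∈ D'.support) :
    G.Walk x y' :=
  (D.takeUntil u hu).append (D'.dropUntil u hu')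

variable {s v : V} {π : G.Walk s v} {D : G.Walk x y} {D' : G.Walk x' y'}

lemma walkWeight_spliceAt_add_spliceAt (W : Sym2 V → ℝ) (hx : x ∈ π.support)
    (hy : y ∈ π.support) (hx' : x' ∈ π.support) (hy' : y' ∈ π.support) (hu : u ∈ D.support)
    (hu' : u ∈ D'.support) :
    walkWeight W (replacementPath π hx hy' (spliceAt D D' hu hu')) +
      walkWeight W (replacementPath π hx' hy (spliceAt D' D hu' hu)) =
    walkWeight W (replacementPath π hx hy D) + walkWeight W (replacementPath π hx' hy' D') := by
  simp only [spliceAt, walkWeight_replacementPath, walkWeight_append]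
  rw [← walkWeight_takeUntil_add_dropUntil W D hu,
    ← walkWeight_takeUntil_add_dropUntil W D' hu']
  ring

lemma notMem_edges_spliceAt {e : Sym2 V} (hu : u ∈ D.support) (hu' : u ∈ D'.support)
    (he : e ∉ D.edges) (he' : e ∉ D'.edges) : e ∉ (spliceAt D D' hu hu').edges := by
  rw [spliceAt, edges_append, List.mem_append, not_or]
  exact ⟨fun h => he (D.edges_takeUntil_subset_edges hu h),
    fun h => he' (D'.edges_dropUntil_subset_edges hu' h)⟩

/-- The shortcut misses the last edge of `D`. -/
lemma bypass_replacementPath_spliceAt_ne_left (hπ : π.IsPath) (hx : x ∈ π.support)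
    (hy : y ∈ π.support) (hy' : y' ∈ π.support) (hDpath : D.IsPath)
    (hD : ∀ w ∈ D.support, w ∈ π.support → w = x ∨ w = y)
    (hD' : ∀ w ∈ D'.support, w ∈ π.support → w = x' ∨ w = y')
    (hu : u ∈ D.support) (hu' : u ∈ D'.support) (huπ : u ∉ π.support)
    (hxy' : vpos π x < vpos π y') (hx'y' : vpos π x' ≤ vpos π y')
    (hy'y : vpos π y' < vpos π y) :
    (replacementPath π hx hy' (spliceAt D D' hu hu')).bypass ≠ replacementPath π hx hy D := by
  intro hbyp
  have hne : ¬ D.Nil := not_nil_of_ne (by rintro rfl; omega)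
  have hlast : s(D.penultimate, y) ∈ D.edges := List.mem_map_of_mem (D.lastDart_mem_darts hne)
  have hmem := edges_bypass_subset_edges _ (hbyp ▸ edges_subset_replacementPath D hlast)
  rcases mem_edges_replacementPath.1 hmem with he | he | he
  · have := vpos_le_of_mem_support_takeUntil hx (snd_mem_support_of_mem_edges _ he)
    omega
  · rcases List.mem_append.1 (edges_append _ _ ▸ he) with he | he
    · exact huπ (hDpath.eq_of_mem_support_takeUntil_of_mem_support_dropUntil hu
        (snd_mem_support_of_mem_edges _ he) (D.dropUntil u hu).end_mem_support ▸ hy)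
    · rcases hD' y (D'.support_dropUntil_subset_support hu'
        (snd_mem_support_of_mem_edges _ he)) hy with rfl | rfl <;> omega
  · have hz := fst_mem_support_of_mem_edges _ he
    rcases hD _ (D.fst_mem_support_of_mem_edges hlast)
      (π.support_dropUntil_subset_support hy' hz) with h | h
    · have := vpos_le_of_mem_support_dropUntil hπ hy' hz
      rw [h] at this
      omega
    · exact (D.adj_penultimate hne).ne h

/-- The shortcut misses the first edge of `D'`. -/
lemma bypass_replacementPath_spliceAt_ne_right (hπ : π.IsPath) (hx : x ∈ π.support)
    (hx' : x' ∈ π.support) (hy' : y' ∈ π.support) (hD'path : D'.IsPath)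
    (hD : ∀ w ∈ D.support, w ∈ π.support → w = x ∨ w = y)
    (hu : u ∈ D.support) (hu' : u ∈ D'.support) (huπ : u ∉ π.support)
    (hxx' : vpos π x < vpos π x') (hx'y' : vpos π x' < vpos π y')
    (hy'y : vpos π y' < vpos π y) :
    (replacementPath π hx hy' (spliceAt D D' hu hu')).bypass ≠ replacementPath π hx' hy' D' := by
  intro hbyp
  have hne : ¬ D'.Nil := not_nil_of_ne (by rintro rfl; omega)
  have hfirst : s(x', D'.snd) ∈ D'.edges := List.mem_map_of_mem (D'.firstDart_mem_darts hne)
  have hmem := edges_bypass_subset_edges _ (hbyp ▸ edges_subset_replacementPath D' hfirst)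
  rcases mem_edges_replacementPath.1 hmem with he | he | he
  · have := vpos_le_of_mem_support_takeUntil hx (fst_mem_support_of_mem_edges _ he)
    omega
  · rcases List.mem_append.1 (edges_append _ _ ▸ he) with he | he
    · rcases hD x' (D.support_takeUntil_subset_support hu
        (fst_mem_support_of_mem_edges _ he)) hx' with rfl | rfl <;> omega
    · exact huπ (hD'path.eq_of_mem_support_takeUntil_of_mem_support_dropUntil hu'
        (D'.takeUntil u hu').start_mem_support (fst_mem_support_of_mem_edges _ he) ▸ hx')
  · have := vpos_le_of_mem_support_dropUntil hπ hy' (fst_mem_support_of_mem_edges _ he)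
    omega

end Splicing

theorem nested_detours_disjoint_general {V : Type*} [DecidableEq V]
    (G : SimpleGraph V) (W : Sym2 V → ℝ) (hW : ∀ e, 0 < W e)
    (huniq : ∀ (s' : Set (Sym2 V)) (u w : V) (p q : G.Walk u w), p.IsPath → q.IsPath →
      (∀ f ∈ p.edges, f ∉ s') → (∀ f ∈ q.edges, f ∉ s') →
      (∀ r : G.Walk u w, r.IsPath → (∀ f ∈ r.edges, f ∉ s') →
        walkWeight W p ≤ walkWeight W r) →
      (∀ r : G.Walk u w, r.IsPath → (∀ f ∈ r.edges, f ∉ s') →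
        walkWeight W q ≤ walkWeight W r) →
      p = q)
    (s v : V) (π : G.Walk s v) (hπ : π.IsPath)
    (x y a a' : Fin 2 → V)
    (hx : ∀ i, x i ∈ π.support) (hy : ∀ i, y i ∈ π.support)
    (ha : ∀ i, s(a i, a' i) ∈ π.edges)
    (hconsec : ∀ i, vpos π (a' i) = vpos π (a i) + 1)
    (hbetween : ∀ i, vpos π (x i) ≤ vpos π (a i) ∧ vpos π (a' i) ≤ vpos π (y i))
    (D : (i : Fin 2) → G.Walk (x i) (y i))
    (hDpath : ∀ i, (D i).IsPath)
    (hintern : ∀ i, ∀ u ∈ (D i).support, u ∈ π.support → u = x i ∨ u = y i)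
    (hPpath : ∀ i,
      ((π.takeUntil (x i) (hx i)).append ((D i).append (π.dropUntil (y i) (hy i)))).IsPath)
    (hPavoid : ∀ i, s(a i, a' i) ∉
      ((π.takeUntil (x i) (hx i)).append ((D i).append (π.dropUntil (y i) (hy i)))).edges)
    (hPopt : ∀ i, ∀ R : G.Walk s v, R.IsPath → s(a i, a' i) ∉ R.edges →
      walkWeight W
        ((π.takeUntil (x i) (hx i)).append ((D i).append (π.dropUntil (y i) (hy i)))) ≤
      walkWeight W R)
    (horder1 : vpos π (x 0) < vpos π (x 1))
    (horder3 : vpos π (y 1) < vpos π (y 0)) :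
    ∀ u ∈ (D 0).support, u ∉ (D 1).support := by
  intro u hu₀ hu₁
  obtain ⟨hxa₀, ha'y₀⟩ := hbetween 0
  obtain ⟨hxa₁, ha'y₁⟩ := hbetween 1
  have hc₀ := hconsec 0
  have hc₁ := hconsec 1
  have hP (i : Fin 2) : IsLightestPathAvoiding W s(a i, a' i)
      (replacementPath π (hx i) (hy i) (D i)) := ⟨hPpath i, hPavoid i, hPopt i⟩
  have huπ : u ∉ π.support := fun h => by
    rcases hintern 0 u hu₀ h with h₀ | h₀ <;> rcases hintern 1 u hu₁ h with h₁ | h₁ <;>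
      · have := congrArg (vpos π) (h₀.symm.trans h₁)
        omega
  have hDe (i j : Fin 2) : s(a j, a' j) ∉ (D i).edges :=
    notMem_edges_of_vpos_succ (hintern i) (ha i) (hconsec i) (hbetween i).1 (hbetween i).2
      (fun h => hPavoid i (edges_subset_replacementPath _ h)) (ha j) (hconsec j)
  have hsum := walkWeight_spliceAt_add_spliceAt W (hx 0) (hy 0) (hx 1) (hy 1) hu₀ hu₁
  have hP'₁ := notMem_edges_replacementPath hπ (hx := hx 0) (hy := hy 1) (by omega) (by omega)
    (notMem_edges_spliceAt hu₀ hu₁ (hDe 0 1) (hDe 1 1))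
  rcases lt_or_ge (vpos π (a 0)) (vpos π (x 1)) with h | h
  · have hP'₀ := notMem_edges_replacementPath hπ (hx := hx 0) (hy := hy 1) (by omega) (by omega)
      (notMem_edges_spliceAt hu₀ hu₁ (hDe 0 0) (hDe 1 0))
    have hQ₁ := notMem_edges_replacementPath hπ (hx := hx 1) (hy := hy 0) (by omega) (by omega)
      (notMem_edges_spliceAt hu₁ hu₀ (hDe 1 1) (hDe 0 1))
    exact bypass_replacementPath_spliceAt_ne_left hπ (hx 0) (hy 0) (hy 1) (hDpath 0)
      (hintern 0) (hintern 1) hu₀ hu₁ huπ (by omega) (by omega) horder3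
      ((hP 0).bypass_eq_of_add_eq hW huniq (hP 1) hP'₀ hQ₁ hsum)
  · have hQ₀ := notMem_edges_replacementPath hπ (hx := hx 1) (hy := hy 0) (by omega) (by omega)
      (notMem_edges_spliceAt hu₁ hu₀ (hDe 1 0) (hDe 0 0))
    exact bypass_replacementPath_spliceAt_ne_right hπ (hx 0) (hx 1) (hy 1) (hDpath 1)
      (hintern 0) hu₀ hu₁ huπ horder1 (by omega) horder3
      ((hP 1).bypass_eq_of_add_eq hW huniq (hP 0) hP'₁ hQ₀ (by linarith))

/-- Setup of single-failure replacement-path detours: `π = π(s,v)` is the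
unique shortest path; for `i ∈ {0,1}`, the failed edge is `e_i = s(a i, a' i) ∈ π` lying on
`π` between `x i` and `y i`; the replacement path
`P_i = π(s, x_i) ∘ D_i ∘ π(y_i, v)` is a shortest `s–v` path avoiding `e_i`, the detour
`D_i` is internally vertex-disjoint from `π`, and its starting point `x i` is the divergence
point closest to `s` among all optimal replacement paths (hypothesis `hmin`).  Shortest
paths in every edge-deleted subgraph are unique under `W` (hypothesis `huniq`).
**Statement 7.** Conclusion: if `D 1` is strictly nested in `D 0`, i.e.
`x 0 < x 1 ≤ y 1 < y 0` on `π`, then `D 0` and `D 1` are vertex-disjoint. -/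
theorem nested_detours_disjoint {V : Type*} [DecidableEq V]
    (G : SimpleGraph V) (W : Sym2 V → ℝ) (hW : ∀ e, 0 < W e)
    (huniq : ∀ (s' : Set (Sym2 V)) (u w : V) (p q : G.Walk u w), p.IsPath → q.IsPath →
      (∀ f ∈ p.edges, f ∉ s') → (∀ f ∈ q.edges, f ∉ s') →
      (∀ r : G.Walk u w, r.IsPath → (∀ f ∈ r.edges, f ∉ s') →
        walkWeight W p ≤ walkWeight W r) →
      (∀ r : G.Walk u w, r.IsPath → (∀ f ∈ r.edges, f ∉ s') →
        walkWeight W q ≤ walkWeight W r) →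
      p = q)
    (s v : V) (π : G.Walk s v) (hπ : π.IsPath)
    (hπopt : ∀ R : G.Walk s v, R.IsPath → walkWeight W π ≤ walkWeight W R)
    (x y a a' : Fin 2 → V)
    (hx : ∀ i, x i ∈ π.support) (hy : ∀ i, y i ∈ π.support)
    (ha : ∀ i, s(a i, a' i) ∈ π.edges)
    (hconsec : ∀ i, vpos π (a' i) = vpos π (a i) + 1)
    (hbetween : ∀ i, vpos π (x i) ≤ vpos π (a i) ∧ vpos π (a' i) ≤ vpos π (y i))
    (D : (i : Fin 2) → G.Walk (x i) (y i))
    (hDpath : ∀ i, (D i).IsPath)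
    (hintern : ∀ i, ∀ u ∈ (D i).support, u ∈ π.support → u = x i ∨ u = y i)
    (hPpath : ∀ i,
      ((π.takeUntil (x i) (hx i)).append ((D i).append (π.dropUntil (y i) (hy i)))).IsPath)
    (hPavoid : ∀ i, s(a i, a' i) ∉
      ((π.takeUntil (x i) (hx i)).append ((D i).append (π.dropUntil (y i) (hy i)))).edges)
    (hPopt : ∀ i, ∀ R : G.Walk s v, R.IsPath → s(a i, a' i) ∉ R.edges →
      walkWeight W
        ((π.takeUntil (x i) (hx i)).append ((D i).append (π.dropUntil (y i) (hy i)))) ≤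
      walkWeight W R)
    (hmin : ∀ i, ∀ (u : V) (hu : u ∈ π.support) (R : G.Walk u v),
      ((π.takeUntil u hu).append R).IsPath →
      s(a i, a' i) ∉ ((π.takeUntil u hu).append R).edges →
      walkWeight W ((π.takeUntil u hu).append R) ≤
        walkWeight W
          ((π.takeUntil (x i) (hx i)).append ((D i).append (π.dropUntil (y i) (hy i)))) →
      0 < R.length → R.getVert 1 ∉ π.support →
      vpos π (x i) ≤ vpos π u)
    (horder1 : vpos π (x 0) < vpos π (x 1))
    (horder2 : vpos π (x 1) ≤ vpos π (y 1))
    (horder3 : vpos π (y 1) < vpos π (y 0)) :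
    ∀ u ∈ (D 0).support, u ∉ (D 1).support :=
  nested_detours_disjoint_general G W hW huniq s v π hπ x y a a' hx hy ha hconsec hbetween D hDpath
    hintern hPpath hPavoid hPopt horder1 horder3
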